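/- The LTL₃ semantics assigns definitive sets: for every LTL formula φ and both answers b ∈ {T, F}, the set ⟦φ⟧₃ b is definitive, i.e., ↯(⟦φ⟧₃ b) = ⟦φ⟧₃ b. -/

import Mathlib

/-!
A set `X` is definitive iff it is closed under extension and `↯X ⊆ X`. Since `↓↓X = ↓X`, the
operator `↯` is idempotent, so every clause built with `↯` or `⩁` is definitive outright. Both
conditions pass to intersections, and to `▷X`: a nonempty trace is a state followed by a trace,
while `ε ∈ ▷X` means `ε ∈ X`, which for extension-closed `X` makes `X` everything.
-/

/-- A trace is a finite list of states or an infinite stream of states. -/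
def Trace (σ : Type) := List σ ⊕ (ℕ → σ)

namespace Trace

variable {σ : Type}

/-- Concatenation of traces; if the first is infinite, the result is the first. -/
def app : Trace σ → Trace σ → Trace σ
  | Sum.inl l, Sum.inl l' => Sum.inl (l ++ l')
  | Sum.inl l, Sum.inr s =>
      Sum.inr (fun n => if h : n < l.length then l.get ⟨n, h⟩ else s (n - l.length))
  | Sum.inr s, _ => Sum.inr s

instance : Append (Trace σ) := ⟨app⟩

/-- The empty trace ε. -/
def eps : Trace σ := Sum.inl []

/-- A trace is infinite iff it is a stream. -/
def Inf (t : Trace σ) : Prop := t.isRight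

/-- Drop the first state of a trace. -/
def drop1 : Trace σ → Trace σ
  | Sum.inl [] => Sum.inl []
  | Sum.inl (_ :: l) => Sum.inl l
  | Sum.inr s => Sum.inr (fun n => s (n + 1))

/-- Drop the first `n` states of a trace. -/
def drop (t : Trace σ) (n : ℕ) : Trace σ := drop1^[n] t

/-- The first state of a trace, if any. -/
def head? : Trace σ → Option σ
  | Sum.inl [] => none
  | Sum.inl (a :: _) => some a
  | Sum.inr s => some (s 0)

/-- The set of prefixes of a trace. -/
def pre (t : Trace σ) : Set (Trace σ) := {u | ∃ v, t = u ++ v}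

/-- The set of prefixes of traces in a set: ↓X. -/
def preS (X : Set (Trace σ)) : Set (Trace σ) := ⋃ t ∈ X, pre t

/-- The set of extensions of a trace: ↑t. -/
def ext (t : Trace σ) : Set (Trace σ) := {u | ∃ v, u = t ++ v}

/-- The definitive prefixes of a set of traces: ↯X. -/
def dp (X : Set (Trace σ)) : Set (Trace σ) := {t | ext t ⊆ preS X}

/-- A set of traces is definitive iff it equals its own set of definitive prefixes. -/
def Definitive (X : Set (Trace σ)) : Prop := X = dp X

/-- Definitive union ⩁ of a collection of trace sets. -/
def dUnionS (S : Set (Set (Trace σ))) : Set (Trace σ) := dp (⋃₀ S)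

/-- Binary / indexed definitive union. -/
def dUnion (X Y : Set (Trace σ)) : Set (Trace σ) := dp (X ∪ Y)

def dUnionI {ι : Sort*} (X : ι → Set (Trace σ)) : Set (Trace σ) := dp (⋃ i, X i)

/-- The prepend operation ▷X. -/
def prepend (X : Set (Trace σ)) : Set (Trace σ) := {t | t.drop 1 ∈ X}

/-- Σ^ω, the set of infinite traces. -/
def omegaSet (σ : Type) : Set (Trace σ) := {t | t.Inf}

/-- The first state of a trace, with the empty state as default. -/
def st0 {A : Type} (t : Trace (Set A)) : Set A := (t.head?).getD ∅

end Trace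

/-- Syntax of LTL formulae over atomic propositions `A`. -/
inductive LTL (A : Type) where
  | top : LTL A
  | atom : A → LTL A
  | neg : LTL A → LTL A
  | and : LTL A → LTL A → LTL A
  | next : LTL A → LTL A
  | until_ : LTL A → LTL A → LTL A

namespace LTL

variable {A : Type}

open Trace

/-- Conventional LTL satisfaction on (infinite) traces. -/
def Sat : Trace (Set A) → LTL A → Prop
  | t, .top => True
  | t, .atom a => a ∈ t.st0
  | t, .neg φ => ¬ Sat t φ
  | t, .and φ ψ => Sat t φ ∧ Sat t ψ
  | t, .next φ => Sat (t.drop 1) φ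
  | t, .until_ φ ψ => ∃ i, Sat (t.drop i) ψ ∧ ∀ j < i, Sat (t.drop j) φ

/-- Answer-indexed family semantics of conventional LTL (sets of infinite traces). -/
def sem : LTL A → Bool → Set (Trace (Set A))
  | .top, true => omegaSet (Set A)
  | .top, false => ∅
  | .atom a, true => {t | t.Inf ∧ a ∈ t.st0}
  | .atom a, false => {t | t.Inf ∧ a ∉ t.st0}
  | .neg φ, b => sem φ (!b)
  | .and φ ψ, true => sem φ true ∩ sem ψ true
  | .and φ ψ, false => sem φ false ∪ sem ψ false
  | .next φ, b => {t | t.drop 1 ∈ sem φ b}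
  | .until_ φ ψ, true => {t | ∃ k, (∀ i < k, t.drop i ∈ sem φ true) ∧ t.drop k ∈ sem ψ true}
  | .until_ φ ψ, false => {t | ∀ k, (∃ i < k, t.drop i ∈ sem φ false) ∨ t.drop k ∈ sem ψ false}

/-- Answer-indexed family semantics of LTL₃ (definitive sets of finite-or-infinite traces). -/
def sem3 : LTL A → Bool → Set (Trace (Set A))
  | .top, true => Set.univ
  | .top, false => ∅
  | .atom a, true => dp {t | t ≠ eps ∧ a ∈ t.st0}
  | .atom a, false => dp {t | t ≠ eps ∧ a ∉ t.st0}
  | .neg φ, b => sem3 φ (!b)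
  | .and φ ψ, true => sem3 φ true ∩ sem3 ψ true
  | .and φ ψ, false => dUnion (sem3 φ false) (sem3 ψ false)
  | .next φ, b => prepend (sem3 φ b)
  | .until_ φ ψ, true =>
      dUnionI (fun k => (fun X => prepend X ∩ sem3 φ true)^[k] (sem3 ψ true))
  | .until_ φ ψ, false =>
      ⋂ k, (fun X => dUnion (prepend X) (sem3 φ false))^[k] (sem3 ψ false)

end LTL

namespace Trace

variable {σ : Type}

theorem append_eps (t : Trace σ) : t ++ eps = t := by
  rcases t with l | s
  · exact congrArg Sum.inl (List.append_nil l)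
  · rfl

theorem eps_append (t : Trace σ) : eps ++ t = t := by
  rcases t with l | s <;> rfl

theorem append_assoc (t u v : Trace σ) : t ++ u ++ v = t ++ (u ++ v) := by
  rcases t with l | s
  swap; · rfl
  rcases u with l' | s
  swap; · rfl
  rcases v with l'' | s
  · exact congrArg Sum.inl (List.append_assoc l l' l'')
  show Sum.inr _ = Sum.inr _
  congr 1; funext n
  simp only [List.length_append, List.get_eq_getElem]
  by_cases h : n < l.length
  · rw [dif_pos (by omega), dif_pos h, List.getElem_append_left h]
  by_cases h' : n < l.length + l'.length
  · rw [dif_pos h', dif_neg h, dif_pos (by omega), List.getElem_append_right (by omega)]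
  · rw [dif_neg h', dif_neg h, dif_neg (by omega), Nat.sub_sub]

def cons (a : σ) (t : Trace σ) : Trace σ := app (Sum.inl [a]) t

theorem cons_append (a : σ) (t v : Trace σ) : cons a t ++ v = cons a (t ++ v) :=
  append_assoc (Sum.inl [a]) t v

theorem drop1_cons (a : σ) (t : Trace σ) : drop1 (cons a t) = t := by
  rcases t with l | s <;> rfl

theorem eq_eps_or_eq_cons (t : Trace σ) : t = eps ∨ ∃ a t', t = cons a t' := by
  rcases t with (_ | ⟨a, l⟩) | s
  · exact .inl rfl
  · exact .inr ⟨a, Sum.inl l, rfl⟩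
  · refine .inr ⟨s 0, Sum.inr fun n => s (n + 1), congrArg Sum.inr (funext fun n => ?_)⟩
    cases n <;> rfl

theorem mem_preS {X : Set (Trace σ)} {u : Trace σ} :
    u ∈ preS X ↔ ∃ x ∈ X, ∃ v, x = u ++ v := by
  simp [preS, pre]

theorem mem_dp {X : Set (Trace σ)} {t : Trace σ} : t ∈ dp X ↔ ∀ v, t ++ v ∈ preS X := by
  simp [dp, ext, Set.subset_def]

theorem subset_preS (X : Set (Trace σ)) : X ⊆ preS X := fun t ht =>
  mem_preS.2 ⟨t, ht, eps, (append_eps t).symm⟩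

theorem preS_mono {X Y : Set (Trace σ)} (h : X ⊆ Y) : preS X ⊆ preS Y := fun _ hu =>
  let ⟨x, hx, v, hv⟩ := mem_preS.1 hu
  mem_preS.2 ⟨x, h hx, v, hv⟩

theorem preS_preS_subset (X : Set (Trace σ)) : preS (preS X) ⊆ preS X := fun _ hu =>
  let ⟨_, hs, v, hsv⟩ := mem_preS.1 hu
  let ⟨x, hx, w, hxw⟩ := mem_preS.1 hs
  mem_preS.2 ⟨x, hx, v ++ w, by rw [hxw, hsv, append_assoc]⟩

theorem dp_subset_preS (X : Set (Trace σ)) : dp X ⊆ preS X := fun t ht => by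
  simpa only [append_eps] using mem_dp.1 ht eps

theorem dp_mono {X Y : Set (Trace σ)} (h : X ⊆ Y) : dp X ⊆ dp Y :=
  fun _ ht => (ht.trans (preS_mono h) :)

theorem subset_dp {X : Set (Trace σ)} (h : ∀ t ∈ X, ∀ v, t ++ v ∈ X) : X ⊆ dp X :=
  fun t ht => mem_dp.2 fun v => subset_preS X (h t ht v)

theorem Definitive.append_mem {X : Set (Trace σ)} (hX : Definitive X) {t : Trace σ}
    (ht : t ∈ X) (v : Trace σ) : t ++ v ∈ X := by
  rw [hX, mem_dp] at ht ⊢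
  intro w
  simpa only [append_assoc] using ht (v ++ w)

theorem definitive_of_dp_subset {X : Set (Trace σ)} (hext : ∀ t ∈ X, ∀ v, t ++ v ∈ X)
    (hdp : dp X ⊆ X) : Definitive X :=
  (subset_dp hext).antisymm hdp

theorem definitive_dp (X : Set (Trace σ)) : Definitive (dp X) := by
  refine definitive_of_dp_subset (fun t ht v => mem_dp.2 fun w => ?_) fun t ht => ?_
  · simpa only [append_assoc] using mem_dp.1 ht (v ++ w)
  · exact (ht.trans (preS_mono (dp_subset_preS X))).trans (preS_preS_subset X)

theorem definitive_univ : Definitive (Set.univ : Set (Trace σ)) :=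
  definitive_of_dp_subset (fun _ _ _ => trivial) (Set.subset_univ _)

theorem definitive_empty : Definitive (∅ : Set (Trace σ)) :=
  definitive_of_dp_subset (fun _ h => h.elim) fun t ht => by
    simpa [preS] using dp_subset_preS ∅ ht

theorem definitive_iInter {ι : Sort*} {X : ι → Set (Trace σ)} (hX : ∀ i, Definitive (X i)) :
    Definitive (⋂ i, X i) := by
  refine definitive_of_dp_subset (fun t ht v => ?_) fun t ht => ?_
  · exact Set.mem_iInter.2 fun i => (hX i).append_mem (Set.mem_iInter.1 ht i) v
  · exact Set.mem_iInter.2 fun i => (hX i).symm ▸ dp_mono (Set.iInter_subset X i) ht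

theorem Definitive.inter {X Y : Set (Trace σ)} (hX : Definitive X) (hY : Definitive Y) :
    Definitive (X ∩ Y) :=
  Set.inter_eq_iInter ▸ definitive_iInter (Bool.rec hY hX)

theorem mem_prepend {X : Set (Trace σ)} {t : Trace σ} : t ∈ prepend X ↔ drop1 t ∈ X :=
  Iff.rfl

theorem mem_preS_of_cons_mem_preS_prepend {X : Set (Trace σ)} {a : σ} {t : Trace σ}
    (h : cons a t ∈ preS (prepend X)) : t ∈ preS X := by
  obtain ⟨x, hx, w, rfl⟩ := mem_preS.1 h
  rw [mem_prepend, cons_append, drop1_cons] at hx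
  exact mem_preS.2 ⟨_, hx, w, rfl⟩

theorem Definitive.prepend [Inhabited σ] {X : Set (Trace σ)} (hX : Definitive X) :
    Definitive (prepend X) := by
  refine definitive_of_dp_subset (fun t ht v => ?_) fun t ht => ?_
  · rw [mem_prepend] at ht ⊢
    rcases eq_eps_or_eq_cons t with rfl | ⟨a, t', rfl⟩
    · simpa only [eps_append] using hX.append_mem (t := eps) ht (drop1 v)
    · rw [drop1_cons] at ht
      rw [cons_append, drop1_cons]
      exact hX.append_mem ht v
  · rw [mem_prepend, hX, mem_dp]
    intro v
    obtain ⟨a, u, hu⟩ : ∃ a u, t ++ u = cons a (drop1 t ++ v) := by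
      rcases eq_eps_or_eq_cons t with rfl | ⟨a, t', rfl⟩
      · exact ⟨default, _, eps_append _⟩
      · exact ⟨a, v, by rw [cons_append, drop1_cons]⟩
    exact mem_preS_of_cons_mem_preS_prepend (hu ▸ mem_dp.1 ht u)

end Trace

theorem sem3_definitive {A : Type} (φ : LTL A) (b : Bool) :
    Trace.Definitive (LTL.sem3 φ b) := by
  induction φ generalizing b with
  | top => cases b; exacts [Trace.definitive_empty, Trace.definitive_univ]
  | atom => cases b <;> exact Trace.definitive_dp _
  | neg φ ih => exact ih _
  | and φ ψ ihφ ihψ => cases b; exacts [Trace.definitive_dp _, (ihφ true).inter (ihψ true)]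
  | next φ ih => exact (ih b).prepend
  | until_ φ ψ _ ihψ =>
    cases b
    · refine Trace.definitive_iInter fun k => ?_
      cases k with
      | zero => exact ihψ false
      | succ k => rw [Function.iterate_succ_apply']; exact Trace.definitive_dp _
    · exact Trace.definitive_dp _
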